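/- arXiv:2206.10494 — 7 statements merged into one kernel-verified Lean document; each statement's English description precedes it below -/
import Mathlib

section
/- Let $a < b$ be real numbers and let $f : [a,b] \to \mathbb{R}$ be a continuous function with $f(a) = f(b)$. Then for every positive integer $n$, there exist $x, y \in [a,b]$ such that $|x - y| = \frac{b-a}{n}$ and $f(x) = f(y)$. -/
/-- For continuous `f` on `[a,b]` with `f a = f b`, for every positive
integer `n` there exist `x, y ∈ Set.Icc a b` with `|x - y| = (b-a)/n` and `f x = f y`. -/
theorem stmt_0 (a b : ℝ) (hab : a < b) (f : ℝ → ℝ)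
    (hf : ContinuousOn f (Set.Icc a b)) (hfab : f a = f b)
    (n : ℕ) (hn : 0 < n) :
    ∃ x ∈ Set.Icc a b, ∃ y ∈ Set.Icc a b,
      |x - y| = (b - a) / n ∧ f x = f y := by
  have hn' : (0:ℝ) < n := by exact_mod_cast hn
  set h : ℝ := (b - a) / n with hh_def
  have hh : 0 < h := div_pos (by linarith) hn'
  have hnh : (n:ℝ) * h = b - a := by
    rw [hh_def]
    field_simp [hn'.ne']
  set g : ℝ → ℝ := fun x => f (x + h) - f x with hg_def
  -- points a + k*h
  have hpmem : ∀ k : ℕ, k ≤ n → a + k * h ∈ Set.Icc a b := by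
    intro k hk
    constructor
    · nlinarith [Nat.cast_nonneg (α := ℝ) k]
    · have : (k:ℝ) ≤ n := by exact_mod_cast hk
      nlinarith
  have hpmem' : ∀ k : ℕ, k < n → a + k * h ∈ Set.Icc a (b - h) := by
    intro k hk
    have hk1 : (k:ℝ) + 1 ≤ n := by exact_mod_cast hk
    constructor
    · nlinarith [Nat.cast_nonneg (α := ℝ) k]
    · nlinarith
  have hsub : Set.Icc a (b - h) ⊆ Set.Icc a b := by
    apply Set.Icc_subset_Icc_right; linarith
  have hgc : ContinuousOn g (Set.Icc a (b - h)) := by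
    apply ContinuousOn.sub
    · apply hf.comp (continuous_add_right h).continuousOn
      intro x hx
      obtain ⟨h1, h2⟩ := hx
      exact ⟨by simpa using by linarith, by simpa using by linarith⟩
    · exact hf.mono hsub
  have hsum : ∑ k ∈ Finset.range n, g (a + k * h) = 0 := by
    have heq : ∀ k : ℕ, g (a + k * h) =
        (fun m : ℕ => f (a + m * h)) (k + 1) - (fun m : ℕ => f (a + m * h)) k := by
      intro k
      simp only [hg_def]
      push_cast
      ring_nf
    rw [Finset.sum_congr rfl (fun k _ => heq k),
      Finset.sum_range_sub (fun m : ℕ => f (a + m * h)) n]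
    have hb : a + (n:ℝ) * h = b := by linarith
    simp [hb, hfab]
  -- there exist i, j with g(p i) ≤ 0 ≤ g(p j)
  have hex_le : ∃ i < n, g (a + i * h) ≤ 0 := by
    by_contra hcon
    push_neg at hcon
    have : 0 < ∑ k ∈ Finset.range n, g (a + k * h) := by
      apply Finset.sum_pos
      · intro k hk; exact hcon k (Finset.mem_range.mp hk)
      · exact Finset.nonempty_range_iff.mpr hn.ne'
    linarith
  have hex_ge : ∃ j < n, 0 ≤ g (a + j * h) := by
    by_contra hcon
    push_neg at hcon
    have : ∑ k ∈ Finset.range n, g (a + k * h) < 0 := by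
      apply Finset.sum_neg
      · intro k hk; exact hcon k (Finset.mem_range.mp hk)
      · exact Finset.nonempty_range_iff.mpr hn.ne'
    linarith
  obtain ⟨i, hi, hgi⟩ := hex_le
  obtain ⟨j, hj, hgj⟩ := hex_ge
  set p := a + i * h
  set q := a + j * h
  have hpI : p ∈ Set.Icc a (b - h) := hpmem' i hi
  have hqI : q ∈ Set.Icc a (b - h) := hpmem' j hj
  have huIcc : Set.uIcc p q ⊆ Set.Icc a (b - h) := Set.uIcc_subset_Icc hpI hqI
  have h0 : (0:ℝ) ∈ Set.uIcc (g p) (g q) := Set.mem_uIcc.mpr (Or.inl ⟨hgi, hgj⟩)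
  have := intermediate_value_uIcc (hgc.mono huIcc) h0
  obtain ⟨c, hc, hgc0⟩ := this
  have hcI : c ∈ Set.Icc a (b - h) := huIcc hc
  refine ⟨c + h, ⟨by linarith [hcI.1], by linarith [hcI.2]⟩, c, hsub hcI, ?_, ?_⟩
  · rw [show c + h - c = h by ring, abs_of_pos hh]
  · have : f (c + h) - f c = 0 := hgc0
    linarith
end

section
/- Let $a < b$ be real numbers and let $d$ satisfy $0 < d < b-a$. If $d$ is not of the form $\frac{b-a}{n}$ for any positive integer $n$, then there exists a continuous function $f : [a,b] \to \mathbb{R}$ with $f(a) = f(b)$ such that there do not exist $x, y \in [a,b]$ with $|x-y| = d$ and $f(x) = f(y)$. -/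
/-- `Dset f X` is the set of positive distances `d` such that `|x - y| = d` and
`f x = f y` for some `x, y ∈ X`. -/
def Dset (f : ℝ → ℝ) (X : Set ℝ) : Set ℝ :=
  {d | 0 < d ∧ ∃ x ∈ X, ∃ y ∈ X, |x - y| = d ∧ f x = f y}

/-- If `0 < d < b - a` and `d` is not of the form `(b-a)/n` for any
positive integer `n`, then there is a continuous `f` on `[a,b]` with `f a = f b`
such that `d ∉ D_f([a,b])`. -/
theorem stmt_1 (a b : ℝ) (hab : a < b) (d : ℝ) (hd0 : 0 < d) (hdb : d < b - a)
    (hdn : ∀ n : ℕ, 0 < n → d ≠ (b - a) / n) :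
    ∃ f : ℝ → ℝ, ContinuousOn f (Set.Icc a b) ∧ f a = f b ∧
      d ∉ Dset f (Set.Icc a b) := by
  set s : ℝ := (Real.sin (Real.pi * (b - a) / d)) ^ 2 with hs
  set f : ℝ → ℝ := fun x =>
    (Real.sin (Real.pi * (x - a) / d)) ^ 2 - ((x - a) / (b - a)) * s with hf
  have hba : (0:ℝ) < b - a := by linarith
  have hdne : d ≠ 0 := ne_of_gt hd0
  -- s > 0
  have hspos : 0 < s := by
    rw [hs]
    have : Real.sin (Real.pi * (b - a) / d) ≠ 0 := by
      intro h
      rcases Real.sin_eq_zero_iff.mp h with ⟨m, hm⟩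
      have h2 : (m:ℝ) = (b - a) / d := by
        have h3 : (m:ℝ) * Real.pi = ((b - a) / d) * Real.pi := by
          rw [hm]; ring
        exact mul_right_cancel₀ Real.pi_ne_zero h3
      have hn1 : 1 < (b - a) / d := (one_lt_div hd0).mpr (by linarith)
      rw [← h2] at hn1
      have hmpos : 0 < m := by exact_mod_cast (by linarith : (0:ℝ) < m)
      lift m to ℕ using hmpos.le
      have hm0 : (m:ℝ) ≠ 0 := by positivity
      refine hdn m (by exact_mod_cast hmpos) ?_
      rw [eq_div_iff hm0]
      field_simp at h2
      push_cast at h2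
      linarith [h2]
    positivity
  -- key: f (x + d) - f x is a nonzero constant
  have hkey : ∀ x : ℝ, f (x + d) - f x = -(d / (b - a)) * s := by
    intro x
    have harg : Real.pi * (x + d - a) / d = Real.pi * (x - a) / d + Real.pi := by
      field_simp; ring
    have hsq : (Real.sin (Real.pi * (x + d - a) / d)) ^ 2
        = (Real.sin (Real.pi * (x - a) / d)) ^ 2 := by
      rw [harg, Real.sin_add_pi]; ring
    simp only [hf]
    rw [hsq]
    field_simp
    ring
  refine ⟨f, ?_, ?_, ?_⟩
  · apply Continuous.continuousOn; fun_prop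
  · simp only [hf]
    have : Real.pi * (b - a) / d = Real.pi * (b - a) / d := rfl
    field_simp
    simp [hs]
  · rintro ⟨-, x, hx, y, hy, hxy, hfeq⟩
    have hne : -(d / (b - a)) * s ≠ 0 := by
      have : d / (b - a) > 0 := div_pos hd0 hba
      intro h
      nlinarith
    rcases abs_eq hd0.le |>.mp hxy with h | h
    · have hx' : x = y + d := by linarith
      have hk := hkey y
      rw [← hx', hfeq, sub_self] at hk
      exact hne hk.symm
    · have hy' : y = x + d := by linarith
      have hk := hkey x
      rw [← hy', hfeq.symm, sub_self] at hk
      exact hne hk.symm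
end

section
/- Let $a < b$ be real numbers. The intersection, over all continuous functions $f : [a,b] \to \mathbb{R}$ with $f(a) = f(b)$, of the sets $D_f([a,b])$ equals $\left\{ \frac{b-a}{n} : n \in \mathbb{N}, n \geq 1 \right\}$. -/
open Real

/-- The intersection of `D_f([a,b])` over all continuous
`f : [a,b] → ℝ` with `f a = f b` is exactly `{(b-a)/n : n ∈ ℕ, n ≥ 1}`. -/
theorem stmt_2 (a b : ℝ) (hab : a < b) :
    (⋂ f ∈ {f : ℝ → ℝ | ContinuousOn f (Set.Icc a b) ∧ f a = f b},
        Dset f (Set.Icc a b)) =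
      {d : ℝ | ∃ n : ℕ, 1 ≤ n ∧ d = (b - a) / n} := by
  have hL : (0:ℝ) < b - a := sub_pos.mpr hab
  ext d
  simp only [Set.mem_iInter, Set.mem_setOf_eq]
  constructor
  · -- hard-ish direction: d in every Dset → d = (b-a)/n
    intro h
    have hd0 : 0 < d := (h (fun _ => 0) ⟨continuousOn_const, rfl⟩).1
    set s : ℝ := Real.sin (π * (b - a) / d) ^ 2 with hs
    set f : ℝ → ℝ := fun x => Real.sin (π * (x - a) / d) ^ 2 - (x - a) * s / (b - a)
      with hfdef
    have hcont : Continuous f := by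
      apply Continuous.sub
      · exact (Real.continuous_sin.comp (by continuity)).pow 2
      · continuity
    have hfab : f a = f b := by
      have hfa : f a = 0 := by simp [hfdef]
      have hfb : f b = 0 := by
        have h1 : (b - a) * s / (b - a) = s := by field_simp
        simp only [hfdef]
        rw [h1, hs]
        ring
      rw [hfa, hfb]
    obtain ⟨-, x, hx, y, hy, hxy, hfxy⟩ := h f ⟨hcont.continuousOn, hfab⟩
    have key : ∀ u v : ℝ, u - v = d → f u = f v → Real.sin (π * (b - a) / d) = 0 := by
      intro u v huv hfe
      have hu : u = v + d := by linarith
      have harg : π * (u - a) / d = π * (v - a) / d + π := by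
        rw [hu]; field_simp; ring
      have hsin : Real.sin (π * (u - a) / d) ^ 2 = Real.sin (π * (v - a) / d) ^ 2 := by
        rw [harg, Real.sin_add_pi, neg_pow]
        ring
      have hfe2 := hfe
      simp only [hfdef] at hfe2
      rw [hsin] at hfe2
      have h2 : (u - a) * s / (b - a) = (v - a) * s / (b - a) := by linarith
      have hs0 : s = 0 := by
        rw [div_left_inj' hL.ne', mul_eq_mul_right_iff, sub_left_inj] at h2
        rcases h2 with h5 | h5
        · exfalso
          have : d = 0 := by rw [← huv, h5]; ring
          exact hd0.ne' this
        · exact h5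
      exact pow_eq_zero_iff (n := 2) (by norm_num) |>.mp (hs ▸ hs0)
    have hsin0 : Real.sin (π * (b - a) / d) = 0 := by
      rcases (abs_eq hd0.le).mp hxy with h1 | h1
      · exact key x y h1 hfxy
      · exact key y x (by linarith) hfxy.symm
    obtain ⟨k, hk⟩ := Real.sin_eq_zero_iff.mp hsin0
    have hkval : (k : ℝ) = (b - a) / d := by
      have hpi : (π:ℝ) ≠ 0 := Real.pi_ne_zero
      have h1 : (k : ℝ) * π * d = π * (b - a) := by
        rw [hk]; field_simp
      have h2 : π * ((k : ℝ) * d) = π * (b - a) := by linarith [h1]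
      have h3 : (k : ℝ) * d = b - a := mul_left_cancel₀ hpi h2
      field_simp
      linarith
    have hkpos : 0 < k := by
      have : (0:ℝ) < (k:ℝ) := hkval ▸ div_pos hL hd0
      exact_mod_cast this
    refine ⟨k.toNat, ?_, ?_⟩
    · omega
    · have hkz : ((k.toNat : ℕ) : ℤ) = k := Int.toNat_of_nonneg hkpos.le
      have hkn : ((k.toNat : ℕ) : ℝ) = (k : ℝ) := by exact_mod_cast hkz
      have hkne : (k:ℝ) ≠ 0 := by
        have h0 : (0:ℝ) < (k:ℝ) := by exact_mod_cast hkpos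
        exact h0.ne'
      rw [hkn, hkval]
      field_simp
    -- end
  · rintro ⟨n, hn, rfl⟩ f hf
    set d : ℝ := (b - a) / n with hddef
    have hn0 : (0:ℝ) < n := by exact_mod_cast hn
    have hd0 : 0 < d := div_pos hL hn0
    have hnd : a + n * d = b := by
      rw [hddef]; field_simp; ring
    have hdle : d ≤ b - a := by
      rw [hddef]
      exact div_le_self hL.le (by exact_mod_cast hn)
    set G : ℝ → ℝ := fun x => f (x + d) - f x with hGdef
    have hGcont : ContinuousOn G (Set.Icc a (b - d)) := by
      apply ContinuousOn.sub
      · apply ContinuousOn.comp hf.1 (Continuous.continuousOn (by continuity))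
        intro x hx
        simp only [Set.mem_Icc] at hx ⊢
        constructor <;> linarith
      · apply hf.1.mono
        intro x hx
        simp only [Set.mem_Icc] at hx ⊢
        constructor <;> linarith
    have hmem : ∀ k : ℕ, k + 1 ≤ n → a + k * d ∈ Set.Icc a (b - d) := by
      intro k hk
      have : ((k:ℝ) + 1) * d ≤ n * d := by
        apply mul_le_mul_of_nonneg_right _ hd0.le
        exact_mod_cast hk
      simp only [Set.mem_Icc]
      constructor
      · nlinarith [hd0.le, Nat.cast_nonneg (α := ℝ) k]
      · nlinarith
    have hsum : ∑ k ∈ Finset.range n, G (a + k * d) = 0 := by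
      have : ∀ k ∈ Finset.range n, G (a + k * d)
          = (fun k : ℕ => f (a + k * d)) (k + 1) - (fun k : ℕ => f (a + k * d)) k := by
        intro k _
        simp only [hGdef]
        congr 2
        push_cast
        ring
      rw [Finset.sum_congr rfl this,
        Finset.sum_range_sub (fun k : ℕ => f (a + (k:ℝ) * d)) n]
      simp only [Nat.cast_zero, zero_mul, add_zero, hnd]
      rw [hf.2]
      ring
    have hne : (Finset.range n).Nonempty := Finset.nonempty_range_iff.mpr (by omega)
    have hex1 : ∃ k ∈ Finset.range n, G (a + k * d) ≤ 0 := by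
      by_contra hc
      push_neg at hc
      have := Finset.sum_pos hc hne
      rw [hsum] at this; exact lt_irrefl _ this
    have hex2 : ∃ k ∈ Finset.range n, 0 ≤ G (a + k * d) := by
      by_contra hc
      push_neg at hc
      have : 0 < ∑ k ∈ Finset.range n, -G (a + k * d) :=
        Finset.sum_pos (fun i hi => neg_pos.mpr (hc i hi)) hne
      rw [Finset.sum_neg_distrib, hsum] at this
      simp at this
    obtain ⟨i, hi, hgi⟩ := hex1
    obtain ⟨j, hj, hgj⟩ := hex2
    set u : ℝ := a + i * d with hu
    set v : ℝ := a + j * d with hv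
    have humem : u ∈ Set.Icc a (b - d) := hmem i (Finset.mem_range.mp hi)
    have hvmem : v ∈ Set.Icc a (b - d) := hmem j (Finset.mem_range.mp hj)
    have hcz : ∃ c ∈ Set.Icc a (b - d), G c = 0 := by
      rcases le_total u v with huv | huv
      · have hsub : Set.Icc u v ⊆ Set.Icc a (b - d) :=
          Set.Icc_subset_Icc humem.1 hvmem.2
        have := intermediate_value_Icc huv (hGcont.mono hsub)
        obtain ⟨c, hc, hGc⟩ := this ⟨hgi, hgj⟩
        exact ⟨c, hsub hc, hGc⟩
      · have hsub : Set.Icc v u ⊆ Set.Icc a (b - d) :=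
          Set.Icc_subset_Icc hvmem.1 humem.2
        have := intermediate_value_Icc' huv (hGcont.mono hsub)
        obtain ⟨c, hc, hGc⟩ := this ⟨hgi, hgj⟩
        exact ⟨c, hsub hc, hGc⟩
    obtain ⟨c, hc, hGc⟩ := hcz
    refine ⟨hd0, c + d, ?_, c, ?_, ?_, ?_⟩
    · simp only [Set.mem_Icc] at hc ⊢
      constructor <;> linarith [hd0.le]
    · simp only [Set.mem_Icc] at hc ⊢
      constructor <;> linarith [hd0.le]
    · rw [add_sub_cancel_left, abs_of_pos hd0]
    · simpa [hGdef, sub_eq_zero] using hGc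
end

section
/- Let $a < b$ and $\lambda$ be real numbers, and let $f : [a,b] \to \mathbb{R}$ be continuous with $f(a) = f(b) = \lambda$. Suppose either $f(x) > \lambda$ for all $x \in (a,b)$, or $f(x) < \lambda$ for all $x \in (a,b)$. Then $D_f([a,b]) = (0, b-a]$. -/
/-- If `f` is continuous on `[a,b]` with `f a = f b = λ` and `f` is
everywhere above `λ` (or everywhere below `λ`) on `(a,b)`, then
`D_f([a,b]) = (0, b-a]`. -/
theorem stmt_5 (a b lam : ℝ) (hab : a < b) (f : ℝ → ℝ)
    (hf : ContinuousOn f (Set.Icc a b)) (hfa : f a = lam) (hfb : f b = lam)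
    (hsign : (∀ x ∈ Set.Ioo a b, lam < f x) ∨ (∀ x ∈ Set.Ioo a b, f x < lam)) :
    Dset f (Set.Icc a b) = Set.Ioc 0 (b - a) := by
  ext d
  constructor
  · rintro ⟨hd, x, hx, y, hy, hxy, -⟩
    refine ⟨hd, ?_⟩
    rw [← hxy]
    rcases abs_sub_le_iff.mp (le_refl |x - y|) with ⟨h1, h2⟩
    cases abs_cases (x - y) with
    | inl h => rw [h.1]; linarith [hx.1, hx.2, hy.1, hy.2]
    | inr h => rw [h.1]; linarith [hx.1, hx.2, hy.1, hy.2]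
  · rintro ⟨hd, hdle⟩
    refine ⟨hd, ?_⟩
    rcases eq_or_lt_of_le hdle with heq | hlt
    · exact ⟨b, ⟨hab.le, le_refl b⟩, a, ⟨le_refl a, hab.le⟩, by
        rw [abs_of_nonneg (by linarith)]; linarith, by rw [hfa, hfb]⟩
    · -- d < b - a; use IVT on g x = f (x + d) - f x on [a, b - d]
      set g : ℝ → ℝ := fun x => f (x + d) - f x with hg
      have hle : a ≤ b - d := by linarith
      have hmaps : Set.MapsTo (fun x => x + d) (Set.Icc a (b - d)) (Set.Icc a b) := by
        intro x hx
        simp only [Set.mem_Icc] at hx ⊢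
        constructor <;> linarith [hx.1, hx.2]
      have hsub : Set.Icc a (b - d) ⊆ Set.Icc a b := by
        intro x hx; exact ⟨hx.1, by linarith [hx.2]⟩
      have hgc : ContinuousOn g (Set.Icc a (b - d)) := by
        exact ((hf.comp (continuous_add_right d).continuousOn hmaps)).sub
          (hf.mono hsub)
      have had : a + d ∈ Set.Ioo a b := ⟨by linarith, by linarith⟩
      have hbd : b - d ∈ Set.Ioo a b := ⟨by linarith, by linarith⟩
      have hga : g a = f (a + d) - lam := by simp [hg, hfa]
      have hgb : g (b - d) = lam - f (b - d) := by
        simp [hg, hfb.symm]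
      have hzero : (0 : ℝ) ∈ Set.uIcc (g a) (g (b - d)) := by
        rcases hsign with h | h
        · have h1 : 0 < g a := by rw [hga]; linarith [h _ had]
          have h2 : g (b - d) < 0 := by rw [hgb]; linarith [h _ hbd]
          exact Set.mem_uIcc.mpr (Or.inr ⟨h2.le, h1.le⟩)
        · have h1 : g a < 0 := by rw [hga]; linarith [h _ had]
          have h2 : 0 < g (b - d) := by rw [hgb]; linarith [h _ hbd]
          exact Set.mem_uIcc.mpr (Or.inl ⟨h1.le, h2.le⟩)
      have huicc : Set.uIcc a (b - d) = Set.Icc a (b - d) := Set.uIcc_of_le hle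
      have := intermediate_value_uIcc (f := g) (a := a) (b := b - d)
        (by rw [huicc]; exact hgc)
      obtain ⟨c, hc, hgc0⟩ := this hzero
      rw [huicc] at hc
      have hceq : f (c + d) = f c := by
        have : f (c + d) - f c = 0 := hgc0
        linarith
      exact ⟨c + d, hmaps hc, c, hsub hc, by
        rw [abs_of_nonneg (by linarith)]; ring, hceq⟩
end

section
/- Let $n \geq 1$ and let $a_1 < b_1 \leq a_2 < b_2 \leq \dots \leq a_n < b_n$ be real numbers. Set $A = \bigcup_{k=1}^n [a_k, b_k]$ and let $f : A \to \mathbb{R}$ be continuous with $f(a_k) = f(b_k) = \lambda$ for $1 \leq k \leq n$. Suppose either $f(x) > \lambda$ for all $x$ in the interior of $A$, or $f(x) < \lambda$ for all $x$ in the interior of $A$. Then the Lebesgue measure of $D_f(A)$ is at least the Lebesgue measure of $A$. -/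
open MeasureTheory

namespace Stmt7Aux

/-- The set of shifts `d` for which the translate of some interval `j` by `d`
"right-covers" some interval `k`. -/
def Sset (a b : ℕ → ℝ) (n : ℕ) : Set ℝ :=
  {d | 0 < d ∧ ∃ j < n, ∃ k < n, a k ≤ a j + d ∧ a j + d ≤ b k ∧ b k ≤ b j + d}

lemma mono_a {a b : ℕ → ℝ} {n : ℕ} (hab : ∀ k < n, a k < b k)
    (hba : ∀ k, k + 1 < n → b k ≤ a (k + 1)) :
    ∀ k, k < n → ∀ j, j ≤ k → a j ≤ a k := by
  intro k
  induction k with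
  | zero => intro _ j hj; obtain rfl := Nat.le_zero.mp hj; exact le_refl _
  | succ k ih =>
    intro hk j hj
    rcases eq_or_lt_of_le hj with rfl | hlt
    · exact le_refl _
    · have h1 := ih (Nat.lt_of_succ_lt hk) j (Nat.lt_succ_iff.mp hlt)
      have h2 := hab k (Nat.lt_of_succ_lt hk)
      have h3 := hba k hk
      linarith

lemma mono_b {a b : ℕ → ℝ} {n : ℕ} (hab : ∀ k < n, a k < b k)
    (hba : ∀ k, k + 1 < n → b k ≤ a (k + 1)) :
    ∀ k, k < n → ∀ j, j ≤ k → b j ≤ b k := by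
  intro k
  induction k with
  | zero => intro _ j hj; obtain rfl := Nat.le_zero.mp hj; exact le_refl _
  | succ k ih =>
    intro hk j hj
    rcases eq_or_lt_of_le hj with rfl | hlt
    · exact le_refl _
    · have h1 := ih (Nat.lt_of_succ_lt hk) j (Nat.lt_succ_iff.mp hlt)
      have h2 := hab (k + 1) hk
      have h3 := hba k hk
      linarith

lemma sset_bound {a b : ℕ → ℝ} {m : ℕ} (hab : ∀ k < m + 1, a k < b k)
    (hba : ∀ k, k + 1 < m + 1 → b k ≤ a (k + 1)) :
    Sset a b (m + 1) ⊆ Set.Ioc 0 (b m - a 0) := by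
  rintro d ⟨hd, j, hj, k, hk, h1, h2, h3⟩
  refine ⟨hd, ?_⟩
  have ha0 : a 0 ≤ a j := mono_a hab hba j hj 0 (Nat.zero_le _)
  have hbm : b k ≤ b m := mono_b hab hba m (Nat.lt_succ_self m) k (Nat.lt_succ_iff.mp hk)
  linarith

lemma comb : ∀ (n : ℕ) (a b : ℕ → ℝ), 1 ≤ n → (∀ k < n, a k < b k) →
    (∀ k, k + 1 < n → b k ≤ a (k + 1)) →
    ∑ k ∈ Finset.range n, ENNReal.ofReal (b k - a k) ≤ volume (Sset a b n) := by
  intro n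
  induction n with
  | zero => intro a b h; exact absurd h (by norm_num)
  | succ n ih =>
    intro a b _ hab hba
    rcases Nat.eq_zero_or_pos n with rfl | hn
    · -- base case: a single interval
      have hsub : Set.Ioc 0 (b 0 - a 0) ⊆ Sset a b 1 := by
        rintro d ⟨hd0, hd1⟩
        exact ⟨hd0, 0, Nat.one_pos, 0, Nat.one_pos, by linarith, by linarith, by linarith⟩
      calc ∑ k ∈ Finset.range 1, ENNReal.ofReal (b k - a k)
          = ENNReal.ofReal (b 0 - a 0) := by simp
        _ = volume (Set.Ioc (0:ℝ) (b 0 - a 0)) := by rw [Real.volume_Ioc, sub_zero]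
        _ ≤ volume (Sset a b 1) := measure_mono hsub
    · obtain ⟨m, rfl⟩ : ∃ m, n = m + 1 := ⟨n - 1, by omega⟩
      -- we prove the claim for m + 2 intervals
      have hA0 : 0 < a (m + 1) - a 0 := by
        have h1 := hab 0 (by omega)
        have h2 := hba 0 (by omega)
        have h3 := mono_a hab hba (m + 1) (by omega) 1 (by omega)
        linarith
      rcases le_total (b 0 - a 0) (b (m + 1) - a (m + 1)) with hc | hc
      · -- first interval is the shorter one: drop it, use pair (0, m+1)
        set a' : ℕ → ℝ := fun i => a (i + 1) with ha'
        set b' : ℕ → ℝ := fun i => b (i + 1) with hb'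
        have hab' : ∀ k < m + 1, a' k < b' k := fun k hk => hab (k + 1) (by omega)
        have hba' : ∀ k, k + 1 < m + 1 → b' k ≤ a' (k + 1) := fun k hk => hba (k + 1) (by omega)
        have ih' := ih a' b' (by omega) hab' hba'
        have hS'b : Sset a' b' (m + 1) ⊆ Set.Ioc 0 (b (m + 1) - a 1) :=
          sset_bound hab' hba'
        set L : ℝ := max (max (a (m + 1) - a 0) (b (m + 1) - b 0)) (b (m + 1) - a 1) with hL
        set P : Set ℝ := Set.Ioc L (b (m + 1) - a 0) with hP
        have hPS : P ⊆ Sset a b (m + 2) := by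
          rintro d ⟨hdL, hdR⟩
          have hL1 : a (m + 1) - a 0 ≤ L := le_trans (le_max_left _ _) (le_max_left _ _)
          have hL2 : b (m + 1) - b 0 ≤ L := le_trans (le_max_right _ _) (le_max_left _ _)
          exact ⟨by linarith, 0, by omega, m + 1, by omega, by linarith, by linarith, by linarith⟩
        have hS'S : Sset a' b' (m + 1) ⊆ Sset a b (m + 2) := by
          rintro d ⟨hd, j, hj, k, hk, h⟩
          exact ⟨hd, j + 1, by omega, k + 1, by omega, h⟩
        have hdisj : Disjoint (Sset a' b' (m + 1)) P := by
          rw [Set.disjoint_left]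
          intro d hd hdP
          have h1 := (hS'b hd).2
          have h2 : L < d := hdP.1
          have h3 : b (m + 1) - a 1 ≤ L := le_max_right _ _
          linarith
        have hvolP : ENNReal.ofReal (b 0 - a 0) ≤ volume P := by
          have hLle : L ≤ b (m + 1) - b 0 := by
            have h1 : a (m + 1) - a 0 ≤ b (m + 1) - b 0 := by linarith
            have h2 : b (m + 1) - a 1 ≤ b (m + 1) - b 0 := by
              have := hba 0 (by omega); linarith
            simp only [hL, max_le_iff]
            exact ⟨⟨h1, le_refl _⟩, h2⟩
          rw [hP, Real.volume_Ioc]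
          exact ENNReal.ofReal_le_ofReal (by linarith)
        calc ∑ k ∈ Finset.range (m + 2), ENNReal.ofReal (b k - a k)
            = (∑ k ∈ Finset.range (m + 1), ENNReal.ofReal (b (k + 1) - a (k + 1)))
              + ENNReal.ofReal (b 0 - a 0) := Finset.sum_range_succ' _ _
          _ ≤ volume (Sset a' b' (m + 1)) + volume P := add_le_add ih' hvolP
          _ = volume (Sset a' b' (m + 1) ∪ P) := (measure_union hdisj measurableSet_Ioc).symm
          _ ≤ volume (Sset a b (m + 2)) := measure_mono (Set.union_subset hS'S hPS)
      · -- last interval is the shorter one: drop it, use pair (0, m+1)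
        have hab' : ∀ k < m + 1, a k < b k := fun k hk => hab k (by omega)
        have hba' : ∀ k, k + 1 < m + 1 → b k ≤ a (k + 1) := fun k hk => hba k (by omega)
        have ih' := ih a b (by omega) hab' hba'
        have hS'b : Sset a b (m + 1) ⊆ Set.Ioc 0 (b m - a 0) := sset_bound hab' hba'
        set L : ℝ := max (max (a (m + 1) - a 0) (b (m + 1) - b 0)) (b m - a 0) with hL
        set P : Set ℝ := Set.Ioc L (b (m + 1) - a 0) with hP
        have hPS : P ⊆ Sset a b (m + 2) := by
          rintro d ⟨hdL, hdR⟩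
          have hL1 : a (m + 1) - a 0 ≤ L := le_trans (le_max_left _ _) (le_max_left _ _)
          have hL2 : b (m + 1) - b 0 ≤ L := le_trans (le_max_right _ _) (le_max_left _ _)
          exact ⟨by linarith, 0, by omega, m + 1, by omega, by linarith, by linarith, by linarith⟩
        have hS'S : Sset a b (m + 1) ⊆ Sset a b (m + 2) := by
          rintro d ⟨hd, j, hj, k, hk, h⟩
          exact ⟨hd, j, by omega, k, by omega, h⟩
        have hdisj : Disjoint (Sset a b (m + 1)) P := by
          rw [Set.disjoint_left]
          intro d hd hdP
          have h1 := (hS'b hd).2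
          have h2 : L < d := hdP.1
          have h3 : b m - a 0 ≤ L := le_max_right _ _
          linarith
        have hvolP : ENNReal.ofReal (b (m + 1) - a (m + 1)) ≤ volume P := by
          have hLle : L ≤ a (m + 1) - a 0 := by
            have h1 : b (m + 1) - b 0 ≤ a (m + 1) - a 0 := by linarith
            have h2 : b m - a 0 ≤ a (m + 1) - a 0 := by
              have := hba m (by omega); linarith
            simp only [hL, max_le_iff]
            exact ⟨⟨le_refl _, h1⟩, h2⟩
          rw [hP, Real.volume_Ioc]
          exact ENNReal.ofReal_le_ofReal (by linarith)
        calc ∑ k ∈ Finset.range (m + 2), ENNReal.ofReal (b k - a k)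
            = (∑ k ∈ Finset.range (m + 1), ENNReal.ofReal (b k - a k))
              + ENNReal.ofReal (b (m + 1) - a (m + 1)) := Finset.sum_range_succ _ _
          _ ≤ volume (Sset a b (m + 1)) + volume P := add_le_add ih' hvolP
          _ = volume (Sset a b (m + 1) ∪ P) := (measure_union hdisj measurableSet_Ioc).symm
          _ ≤ volume (Sset a b (m + 2)) := measure_mono (Set.union_subset hS'S hPS)

lemma sset_subset_dset {n : ℕ} {a b : ℕ → ℝ} {lam : ℝ} {f : ℝ → ℝ}
    (hab : ∀ k < n, a k < b k)
    (hf : ContinuousOn f (⋃ k ∈ Finset.range n, Set.Icc (a k) (b k)))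
    (hend : ∀ k < n, f (a k) = lam ∧ f (b k) = lam)
    (hge : ∀ x ∈ (⋃ k ∈ Finset.range n, Set.Icc (a k) (b k)), lam ≤ f x) :
    Sset a b n ⊆ Dset f (⋃ k ∈ Finset.range n, Set.Icc (a k) (b k)) := by
  rintro d ⟨hd, j, hj, k, hk, h1, h2, h3⟩
  set A : Set ℝ := ⋃ k ∈ Finset.range n, Set.Icc (a k) (b k) with hA
  have hsubA : ∀ i, i < n → Set.Icc (a i) (b i) ⊆ A := by
    intro i hi x hx
    exact Set.mem_iUnion₂.mpr ⟨i, Finset.mem_range.mpr hi, hx⟩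
  have habj := hab j hj
  have hne : a j ≤ b k - d := by linarith
  have hIsub : Set.Icc (a j) (b k - d) ⊆ Set.Icc (a j) (b j) :=
    Set.Icc_subset_Icc_right (by linarith)
  have hmaps : ∀ x ∈ Set.Icc (a j) (b k - d), x + d ∈ Set.Icc (a k) (b k) := by
    rintro x ⟨hx1, hx2⟩
    exact ⟨by linarith, by linarith⟩
  set g : ℝ → ℝ := fun x => f (x + d) - f x with hg
  have hcont : ContinuousOn g (Set.Icc (a j) (b k - d)) := by
    apply ContinuousOn.sub
    · exact ContinuousOn.comp hf ((continuous_id.add continuous_const).continuousOn)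
        (fun x hx => hsubA k hk (hmaps x hx))
    · exact hf.mono (Set.Subset.trans hIsub (hsubA j hj))
  have hgl : g (a j) = f (a j + d) - lam := by rw [hg]; simp [(hend j hj).1]
  have hgr : g (b k - d) = lam - f (b k - d) := by
    rw [hg]; simp only [sub_add_cancel]; rw [(hend k hk).2]
  have h0mem : (0:ℝ) ∈ Set.Icc (g (b k - d)) (g (a j)) := by
    constructor
    · rw [hgr]
      have : f (b k - d) ≥ lam := hge _ (hsubA j hj (hIsub ⟨hne, le_refl _⟩))
      linarith
    · rw [hgl]
      have : f (a j + d) ≥ lam :=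
        hge _ (hsubA k hk (hmaps (a j) ⟨le_refl _, hne⟩))
      linarith
  obtain ⟨x, hxI, hgx⟩ := intermediate_value_Icc' hne hcont h0mem
  have hfx : f (x + d) = f x := by
    have : f (x + d) - f x = 0 := hgx
    linarith
  refine ⟨hd, x + d, hsubA k hk (hmaps x hxI), x, hsubA j hj (hIsub hxI), ?_, hfx⟩
  rw [add_sub_cancel_left]
  exact abs_of_pos hd

lemma key (n : ℕ) (hn : 1 ≤ n) (a b : ℕ → ℝ) (lam : ℝ) (f : ℝ → ℝ)
    (hab : ∀ k < n, a k < b k) (hba : ∀ k, k + 1 < n → b k ≤ a (k + 1))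
    (hf : ContinuousOn f (⋃ k ∈ Finset.range n, Set.Icc (a k) (b k)))
    (hend : ∀ k < n, f (a k) = lam ∧ f (b k) = lam)
    (hge : ∀ x ∈ (⋃ k ∈ Finset.range n, Set.Icc (a k) (b k)), lam ≤ f x) :
    volume (⋃ k ∈ Finset.range n, Set.Icc (a k) (b k)) ≤
      volume (Dset f (⋃ k ∈ Finset.range n, Set.Icc (a k) (b k))) :=
  calc volume (⋃ k ∈ Finset.range n, Set.Icc (a k) (b k))
      ≤ ∑ k ∈ Finset.range n, volume (Set.Icc (a k) (b k)) :=
        measure_biUnion_finset_le _ _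
    _ = ∑ k ∈ Finset.range n, ENNReal.ofReal (b k - a k) := by
        simp [Real.volume_Icc]
    _ ≤ volume (Sset a b n) := comb n a b hn hab hba
    _ ≤ volume (Dset f (⋃ k ∈ Finset.range n, Set.Icc (a k) (b k))) :=
        measure_mono (sset_subset_dset hab hf hend hge)

end Stmt7Aux

/-- Let `a₁ < b₁ ≤ a₂ < b₂ ≤ ⋯ ≤ aₙ < bₙ`, `A = ⋃ₖ [aₖ, bₖ]`, and
let `f` be continuous on `A` with `f(aₖ) = f(bₖ) = λ` for all `k`, and everywhere
above `λ` (or everywhere below `λ`) on the interior of `A`. Then the Lebesgue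
measure of `D_f(A)` is at least that of `A`. -/
theorem stmt_7 (n : ℕ) (hn : 1 ≤ n) (a b : ℕ → ℝ) (lam : ℝ) (f : ℝ → ℝ)
    (hab : ∀ k < n, a k < b k) (hba : ∀ k, k + 1 < n → b k ≤ a (k + 1))
    (hf : ContinuousOn f (⋃ k ∈ Finset.range n, Set.Icc (a k) (b k)))
    (hend : ∀ k < n, f (a k) = lam ∧ f (b k) = lam)
    (hsign :
      (∀ x ∈ interior (⋃ k ∈ Finset.range n, Set.Icc (a k) (b k)), lam < f x) ∨
      (∀ x ∈ interior (⋃ k ∈ Finset.range n, Set.Icc (a k) (b k)), f x < lam)) :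
    volume (⋃ k ∈ Finset.range n, Set.Icc (a k) (b k)) ≤
      volume (Dset f (⋃ k ∈ Finset.range n, Set.Icc (a k) (b k))) := by
  classical
  set A : Set ℝ := ⋃ k ∈ Finset.range n, Set.Icc (a k) (b k) with hA
  have hsubA : ∀ i, i < n → Set.Icc (a i) (b i) ⊆ A := by
    intro i hi x hx
    exact Set.mem_iUnion₂.mpr ⟨i, Finset.mem_range.mpr hi, hx⟩
  have hIoo : ∀ k, k < n → Set.Ioo (a k) (b k) ⊆ interior A := fun k hk =>
    interior_maximal (Set.Subset.trans Set.Ioo_subset_Icc_self (hsubA k hk)) isOpen_Ioo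
  -- classify points of A
  have hcases : ∀ x ∈ A, x ∈ interior A ∨ (∃ k < n, x = a k ∨ x = b k) := by
    intro x hx
    obtain ⟨k, hk, hxk⟩ := Set.mem_iUnion₂.mp hx
    rw [Finset.mem_range] at hk
    rcases eq_or_lt_of_le hxk.1 with h1 | h1
    · exact Or.inr ⟨k, hk, Or.inl h1.symm⟩
    rcases eq_or_lt_of_le hxk.2 with h2 | h2
    · exact Or.inr ⟨k, hk, Or.inr h2⟩
    · exact Or.inl (hIoo k hk ⟨h1, h2⟩)
  rcases hsign with hs | hs
  · apply Stmt7Aux.key n hn a b lam f hab hba hf hend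
    intro x hx
    rcases hcases x hx with h | ⟨k, hk, h | h⟩
    · exact (hs x h).le
    · rw [h, (hend k hk).1]
    · rw [h, (hend k hk).2]
  · set g : ℝ → ℝ := fun x => 2 * lam - f x with hgdef
    have hD : Dset f A = Dset g A := by
      ext d
      simp only [Dset, Set.mem_setOf_eq]
      constructor
      · rintro ⟨hd, x, hx, y, hy, hxy, he⟩
        exact ⟨hd, x, hx, y, hy, hxy, by simp only [hgdef]; linarith⟩
      · rintro ⟨hd, x, hx, y, hy, hxy, he⟩
        refine ⟨hd, x, hx, y, hy, hxy, ?_⟩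
        simp only [hgdef] at he
        linarith
    rw [hD]
    apply Stmt7Aux.key n hn a b lam g hab hba
    · exact continuousOn_const.sub hf
    · intro k hk
      constructor
      · simp only [hgdef]; rw [(hend k hk).1]; ring
      · simp only [hgdef]; rw [(hend k hk).2]; ring
    · intro x hx
      rcases hcases x hx with h | ⟨k, hk, h | h⟩
      · have := hs x h
        simp only [hgdef]
        linarith
      · simp only [hgdef]; rw [h, (hend k hk).1]; linarith
      · simp only [hgdef]; rw [h, (hend k hk).2]; linarith
end

section
/- Let $\{I_n\}_{n=1}^\infty$ be a countable collection of closed intervals in $\mathbb{R}$ with pairwise disjoint interiors, and set $A = \bigcup_{n=1}^\infty I_n$. Assume $A$ is bounded. Let $f : A \to \mathbb{R}$ be continuous with $f(x) = \lambda$ at both endpoints of each $I_n$, and suppose either $f(x) > \lambda$ for all $x$ in the interior of $A$, or $f(x) < \lambda$ for all $x$ in the interior of $A$. Then the Lebesgue outer measure of $D_f(A)$ is at least the Lebesgue outer measure of $A$. -/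
open MeasureTheory

/-- Measure-counting lemma: if a set `D` of positive reals contains, for each
suitably ordered pair of separated nondegenerate intervals, the "chord band"
`Ioc (max (a j - a i) (b j - b i)) (b j - a i)`, then the measure of `D` is at
least the total length of the intervals. -/
lemma lemmaM (a b : ℕ → ℝ) (D : Set ℝ) :
    ∀ (n : ℕ) (s : Finset ℕ), s.card ≤ n →
    (∀ i ∈ s, a i < b i) →
    (∀ i ∈ s, ∀ j ∈ s, i ≠ j → b i < a j ∨ b j < a i) →
    (∀ i ∈ s, ∀ j ∈ s, a i ≤ a j → b i ≤ b j →
        Set.Ioc (max (a j - a i) (b j - b i)) (b j - a i) ⊆ D) →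
    ∀ c : ℝ, (∀ i ∈ s, ∀ j ∈ s, b j - a i ≤ c) →
    (∑ i ∈ s, ENNReal.ofReal (b i - a i)) ≤ volume (D ∩ Set.Ioc 0 c) := by
  intro n
  induction n with
  | zero =>
    intro s hcard _ _ _ c _
    have : s = ∅ := Finset.card_eq_zero.mp (Nat.le_zero.mp hcard)
    simp [this]
  | succ n ih =>
    intro s hcard hlt hsep hch c hc
    rcases s.eq_empty_or_nonempty with rfl | hne
    · simp
    obtain ⟨i₀, hi₀s, hi₀⟩ := s.exists_min_image a hne
    obtain ⟨i₁, hi₁s, hi₁⟩ := s.exists_max_image b hne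
    have ha01 : a i₀ ≤ a i₁ := hi₀ _ hi₁s
    have hb01 : b i₀ ≤ b i₁ := hi₁ _ hi₀s
    have hlt0 := hlt i₀ hi₀s
    have hlt1 := hlt i₁ hi₁s
    set c' := max (a i₁ - a i₀) (b i₁ - b i₀) with hc'def
    have hcc' : c' ≤ b i₁ - a i₀ := max_le (by linarith) (by linarith)
    have hcbound : b i₁ - a i₀ ≤ c := hc i₀ hi₀s i₁ hi₁s
    set irm := if b i₀ - a i₀ ≤ b i₁ - a i₁ then i₀ else i₁ with hirm
    have hirms : irm ∈ s := by
      rw [hirm]; split <;> assumption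
    -- bound for the erased set
    have herased : ∀ i ∈ s.erase irm, ∀ j ∈ s.erase irm, b j - a i ≤ c' := by
      intro i hi j hj
      obtain ⟨hine, his⟩ := Finset.mem_erase.mp hi
      obtain ⟨hjne, hjs⟩ := Finset.mem_erase.mp hj
      rw [hirm] at hine hjne
      by_cases h : b i₀ - a i₀ ≤ b i₁ - a i₁
      · simp only [if_pos h] at hine
        have hsep' := hsep i₀ hi₀s i his (fun e => hine e.symm)
        have hai : b i₀ < a i := by
          rcases hsep' with h' | h'
          · exact h'
          · exact absurd (hi₀ i his) (by linarith [hlt i his])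
        have : b j ≤ b i₁ := hi₁ j hjs
        have : b j - a i < b i₁ - b i₀ := by linarith
        exact le_trans this.le (le_max_right _ _)
      · simp only [if_neg h] at hjne
        have hsep' := hsep j hjs i₁ hi₁s hjne
        have hbj : b j < a i₁ := by
          rcases hsep' with h' | h'
          · exact h'
          · exact absurd (hi₁ j hjs) (by linarith [hlt j hjs])
        have : a i₀ ≤ a i := hi₀ i his
        have : b j - a i < a i₁ - a i₀ := by linarith
        exact le_trans this.le (le_max_left _ _)
    have hJ : Set.Ioc c' (b i₁ - a i₀) ⊆ D := hch i₀ hi₀s i₁ hi₁s ha01 hb01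
    have hJc : Set.Ioc c' (b i₁ - a i₀) ⊆ D ∩ Set.Ioc 0 c := by
      intro x hx
      refine ⟨hJ hx, ?_, le_trans hx.2 hcbound⟩
      have h0c' : (0 : ℝ) ≤ c' := le_trans (by linarith) (le_max_left (a i₁ - a i₀) (b i₁ - b i₀))
      linarith [hx.1]
    -- volume of the chord band
    have hvolJ : ENNReal.ofReal (min (b i₀ - a i₀) (b i₁ - a i₁))
        = volume (Set.Ioc c' (b i₁ - a i₀)) := by
      rw [Real.volume_Ioc]
      congr 1
      rw [hc'def]
      rcases max_cases (a i₁ - a i₀) (b i₁ - b i₀) with ⟨h1, h2⟩ | ⟨h1, h2⟩ <;>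
        rcases min_cases (b i₀ - a i₀) (b i₁ - a i₁) with ⟨h3, h4⟩ | ⟨h3, h4⟩ <;>
        rw [h1, h3] <;> linarith
    -- the key measure estimate
    have key : ENNReal.ofReal (min (b i₀ - a i₀) (b i₁ - a i₁)) + volume (D ∩ Set.Ioc 0 c')
        ≤ volume (D ∩ Set.Ioc 0 c) := by
      have hmeas : MeasurableSet (Set.Ioc c' (b i₁ - a i₀)) := measurableSet_Ioc
      rw [← measure_inter_add_diff (D ∩ Set.Ioc 0 c) hmeas]
      refine add_le_add ?_ ?_
      · rw [hvolJ]
        exact measure_mono (Set.subset_inter hJc Set.Subset.rfl)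
      · refine measure_mono ?_
        rintro x ⟨hxD, hx0, hxc'⟩
        exact ⟨⟨hxD, hx0, le_trans hxc' (le_trans hcc' hcbound)⟩,
          fun hx => absurd hx.1 (not_lt.mpr hxc')⟩
    -- apply the inductive hypothesis to the erased set
    have hcard' : (s.erase irm).card ≤ n := by
      rw [Finset.card_erase_of_mem hirms]
      omega
    have ih' := ih (s.erase irm) hcard'
      (fun i hi => hlt i (Finset.mem_of_mem_erase hi))
      (fun i hi j hj hij => hsep i (Finset.mem_of_mem_erase hi) j (Finset.mem_of_mem_erase hj) hij)
      (fun i hi j hj hij hij' => hch i (Finset.mem_of_mem_erase hi) j (Finset.mem_of_mem_erase hj) hij hij')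
      c' herased
    have hsum : ∑ i ∈ s, ENNReal.ofReal (b i - a i)
        = ENNReal.ofReal (b irm - a irm) + ∑ i ∈ s.erase irm, ENNReal.ofReal (b i - a i) :=
      (Finset.add_sum_erase s _ hirms).symm
    have hmin : ENNReal.ofReal (b irm - a irm)
        = ENNReal.ofReal (min (b i₀ - a i₀) (b i₁ - a i₁)) := by
      rw [hirm]
      split
      · rw [min_eq_left (by assumption)]
      · rw [min_eq_right (le_of_not_ge (by assumption))]
    rw [hsum, hmin]
    exact le_trans (add_le_add le_rfl ih') key

/-- Chord existence lemma: given two (possibly equal) nondegenerate intervals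
inside `A`, with `f` continuous on each, equal to `lam` at the endpoints, and
strictly above `lam` on their interiors, every distance in the band
`Ioc (max (a₁ - a₀) (b₁ - b₀)) (b₁ - a₀)` is realized as a chord of `f`. -/
lemma chord (f : ℝ → ℝ) (lam : ℝ) (A : Set ℝ) (a₀ b₀ a₁ b₁ : ℝ)
    (h0 : Set.Icc a₀ b₀ ⊆ A) (h1 : Set.Icc a₁ b₁ ⊆ A)
    (hf0 : ContinuousOn f (Set.Icc a₀ b₀)) (hf1 : ContinuousOn f (Set.Icc a₁ b₁))
    (he1 : f a₀ = lam) (he2 : f b₀ = lam) (he3 : f a₁ = lam) (he4 : f b₁ = lam)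
    (hpos0 : ∀ x ∈ Set.Ioo a₀ b₀, lam < f x) (hpos1 : ∀ x ∈ Set.Ioo a₁ b₁, lam < f x)
    (hlt0 : a₀ < b₀) (hlt1 : a₁ < b₁) (ha : a₀ ≤ a₁) (hb : b₀ ≤ b₁) :
    Set.Ioc (max (a₁ - a₀) (b₁ - b₀)) (b₁ - a₀) ⊆ Dset f A := by
  rintro d ⟨hdl, hdr⟩
  have hmax1 : a₁ - a₀ < d := lt_of_le_of_lt (le_max_left _ _) hdl
  have hmax2 : b₁ - b₀ < d := lt_of_le_of_lt (le_max_right _ _) hdl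
  have hd0 : 0 < d := by linarith
  rcases eq_or_lt_of_le hdr with heq | hdlt
  · -- d = b₁ - a₀ : use the endpoint chord (a₀, b₁)
    refine ⟨hd0, a₀, h0 ⟨le_refl _, hlt0.le⟩, b₁, h1 ⟨hlt1.le, le_refl _⟩, ?_, by rw [he1, he4]⟩
    rw [abs_sub_comm, abs_of_nonneg (by linarith)]
    linarith
  · -- d < b₁ - a₀ : intermediate value argument
    have hmem1 : a₀ + d ∈ Set.Ioo a₁ b₁ := ⟨by linarith, by linarith⟩
    have hmem2 : b₁ - d ∈ Set.Ioo a₀ b₀ := ⟨by linarith, by linarith⟩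
    set g : ℝ → ℝ := fun x => f (x + d) - f x with hg
    have hgc : ContinuousOn g (Set.Icc a₀ (b₁ - d)) := by
      apply ContinuousOn.sub
      · apply ContinuousOn.comp hf1 ((continuous_add_right d).continuousOn)
        intro x hx
        show x + d ∈ Set.Icc a₁ b₁
        exact ⟨by have := hx.1; linarith, by have := hx.2; linarith⟩
      · exact hf0.mono (Set.Icc_subset_Icc le_rfl (by linarith))
    have hgb : g (b₁ - d) < 0 := by
      have : b₁ - d + d = b₁ := by ring
      simp only [hg, this, he4]
      have := hpos0 _ hmem2
      linarith
    have hga : 0 < g a₀ := by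
      simp only [hg, he1]
      have := hpos1 _ hmem1
      linarith
    have hivt := intermediate_value_Icc' (by linarith : a₀ ≤ b₁ - d) hgc
    obtain ⟨x, hx, hgx⟩ := hivt ⟨hgb.le, hga.le⟩
    have hx0 : x ∈ Set.Icc a₀ b₀ := ⟨hx.1, by have := hx.2; linarith⟩
    have hx1 : x + d ∈ Set.Icc a₁ b₁ := ⟨by have := hx.1; linarith, by have := hx.2; linarith⟩
    refine ⟨hd0, x, h0 hx0, x + d, h1 hx1, ?_, ?_⟩
    · rw [show x - (x + d) = -d by ring, abs_neg, abs_of_pos hd0]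
    · have : f (x + d) - f x = 0 := hgx
      linarith

lemma Dset_flip (c : ℝ) (f : ℝ → ℝ) (X : Set ℝ) :
    Dset (fun x => c - f x) X = Dset f X := by
  ext d
  simp only [Dset, Set.mem_setOf_eq]
  constructor <;> rintro ⟨hd, x, hx, y, hy, hxy, hfxy⟩ <;>
    exact ⟨hd, x, hx, y, hy, hxy, by linarith⟩

lemma main_aux (a b : ℕ → ℝ) (lam : ℝ) (f : ℝ → ℝ)
    (hab : ∀ n, a n ≤ b n)
    (hdisj : Pairwise fun m n =>
      Disjoint (interior (Set.Icc (a m) (b m))) (interior (Set.Icc (a n) (b n))))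
    (hf : ContinuousOn f (⋃ n, Set.Icc (a n) (b n)))
    (hend : ∀ n, f (a n) = lam ∧ f (b n) = lam)
    (hpos : ∀ x ∈ interior (⋃ n, Set.Icc (a n) (b n)), lam < f x) :
    volume (⋃ n, Set.Icc (a n) (b n)) ≤
      volume (Dset f (⋃ n, Set.Icc (a n) (b n))) := by
  set A := ⋃ n, Set.Icc (a n) (b n) with hA
  have hsubA : ∀ n, Set.Icc (a n) (b n) ⊆ A := fun n => by
    rw [hA]; exact Set.subset_iUnion (fun k => Set.Icc (a k) (b k)) n
  -- strict separation of nondegenerate intervals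
  have hstrict : ∀ i j, a i < b i → a j < b j → b i ≤ a j → b i < a j := by
    intro i j hi hj h
    rcases lt_or_eq_of_le h with h' | h'
    · exact h'
    · exfalso
      have hsub : Set.Ioo (a i) (b j) ⊆ A := by
        intro x hx
        rcases le_or_gt x (b i) with hxx | hxx
        · exact hsubA i ⟨hx.1.le, hxx⟩
        · exact hsubA j ⟨by rw [← h']; exact hxx.le, hx.2.le⟩
      have hbi : b i ∈ interior A :=
        interior_maximal hsub isOpen_Ioo ⟨hi, by rw [h']; exact hj⟩
      have := hpos _ hbi
      rw [(hend i).2] at this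
      exact lt_irrefl _ this
  have hsep : ∀ i j, i ≠ j → a i < b i → a j < b j → b i < a j ∨ b j < a i := by
    intro i j hij hi hj
    have hd := hdisj hij
    simp only [interior_Icc] at hd
    have hle : b i ≤ a j ∨ b j ≤ a i := by
      by_contra h
      push_neg at h
      obtain ⟨h1, h2⟩ := h
      set x := (max (a i) (a j) + min (b i) (b j)) / 2 with hx
      have hmm : max (a i) (a j) < min (b i) (b j) := by
        rw [max_lt_iff, lt_min_iff, lt_min_iff]
        exact ⟨⟨hi, h2⟩, ⟨h1, hj⟩⟩
      have hx1 : x ∈ Set.Ioo (a i) (b i) := by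
        constructor
        · have := le_max_left (a i) (a j); rw [hx]; linarith
        · have := min_le_left (b i) (b j); rw [hx]; linarith
      have hx2 : x ∈ Set.Ioo (a j) (b j) := by
        constructor
        · have := le_max_right (a i) (a j); rw [hx]; linarith
        · have := min_le_right (b i) (b j); rw [hx]; linarith
      exact Set.disjoint_left.mp hd hx1 hx2
    rcases hle with h | h
    · exact Or.inl (hstrict i j hi hj h)
    · exact Or.inr (hstrict j i hj hi h)
  -- reduce to finite unions
  have hUeq : A = ⋃ N : ℕ, ⋃ i ∈ Finset.range N, Set.Icc (a i) (b i) := by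
    apply Set.Subset.antisymm
    · refine Set.iUnion_subset fun n => Set.subset_iUnion_of_subset (n + 1) ?_
      intro x hx
      exact Set.mem_biUnion (Finset.self_mem_range_succ n) hx
    · exact Set.iUnion_subset fun N => Set.iUnion₂_subset fun i _ => hsubA i
  have hmono : Monotone fun N : ℕ => ⋃ i ∈ Finset.range N, Set.Icc (a i) (b i) := by
    intro M N hMN
    exact Set.biUnion_subset_biUnion_left
      (Finset.coe_subset.mpr (Finset.range_subset_range.mpr hMN))
  have hdir : Directed (· ⊆ ·) fun N : ℕ => ⋃ i ∈ Finset.range N, Set.Icc (a i) (b i) :=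
    hmono.directed_le
  have hkey : ∀ N : ℕ, volume (⋃ i ∈ Finset.range N, Set.Icc (a i) (b i))
      ≤ volume (Dset f A) := by
    intro N
    calc volume (⋃ i ∈ Finset.range N, Set.Icc (a i) (b i))
      ≤ ∑ i ∈ Finset.range N, volume (Set.Icc (a i) (b i)) :=
        measure_biUnion_finset_le _ _
    _ = ∑ i ∈ Finset.range N, ENNReal.ofReal (b i - a i) := by
        simp [Real.volume_Icc]
    _ = ∑ i ∈ (Finset.range N).filter (fun i => a i < b i), ENNReal.ofReal (b i - a i) := by
        refine (Finset.sum_filter_of_ne ?_).symm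
        intro i _ hne
        by_contra h
        push_neg at h
        exact hne (by rw [ENNReal.ofReal_eq_zero]; linarith)
    _ ≤ volume (Dset f A) := by
        set s := (Finset.range N).filter (fun i => a i < b i) with hs
        have hmem : ∀ i ∈ s, a i < b i := fun i hi => (Finset.mem_filter.mp hi).2
        rcases s.eq_empty_or_nonempty with he | hne
        · simp [he]
        obtain ⟨i₀, hi₀s, hi₀⟩ := s.exists_min_image a hne
        obtain ⟨j₀, hj₀s, hj₀⟩ := s.exists_max_image b hne
        have hM := lemmaM a b (Dset f A) s.card s le_rfl hmem
          (fun i hi j hj hij => hsep i j hij (hmem i hi) (hmem j hj))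
          (fun i hi j hj hij hij' => by
            refine chord f lam A (a i) (b i) (a j) (b j) (hsubA i) (hsubA j)
              (hf.mono (hsubA i)) (hf.mono (hsubA j))
              (hend i).1 (hend i).2 (hend j).1 (hend j).2 ?_ ?_
              (hmem i hi) (hmem j hj) hij hij'
            · intro x hx
              refine hpos x ?_
              have : Set.Ioo (a i) (b i) ⊆ interior A := by
                rw [← interior_Icc]
                exact interior_mono (hsubA i)
              exact this hx
            · intro x hx
              refine hpos x ?_
              have : Set.Ioo (a j) (b j) ⊆ interior A := by
                rw [← interior_Icc]
                exact interior_mono (hsubA j)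
              exact this hx)
          (b j₀ - a i₀)
          (fun i hi j hj => by
            have := hi₀ i hi
            have := hj₀ j hj
            linarith)
        exact le_trans hM (measure_mono Set.inter_subset_left)
  calc volume A = ⨆ N : ℕ, volume (⋃ i ∈ Finset.range N, Set.Icc (a i) (b i)) := by
        rw [hUeq]; exact hdir.measure_iUnion
    _ ≤ volume (Dset f A) := iSup_le hkey

/-- Let `Iₙ = [aₙ, bₙ]` be countably many closed intervals with
pairwise disjoint interiors whose union `A` is bounded. If `f` is continuous on
`A`, equals `λ` at the endpoints of each `Iₙ`, and is everywhere above `λ` (or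
everywhere below `λ`) on the interior of `A`, then the Lebesgue outer measure of
`D_f(A)` is at least that of `A`. (Here `volume` of an arbitrary set is
Lebesgue outer measure.) -/
theorem stmt_8 (a b : ℕ → ℝ) (lam : ℝ) (f : ℝ → ℝ)
    (hab : ∀ n, a n ≤ b n)
    (hdisj : Pairwise fun m n =>
      Disjoint (interior (Set.Icc (a m) (b m))) (interior (Set.Icc (a n) (b n))))
    (hbdd : Bornology.IsBounded (⋃ n, Set.Icc (a n) (b n)))
    (hf : ContinuousOn f (⋃ n, Set.Icc (a n) (b n)))
    (hend : ∀ n, f (a n) = lam ∧ f (b n) = lam)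
    (hsign : (∀ x ∈ interior (⋃ n, Set.Icc (a n) (b n)), lam < f x) ∨
             (∀ x ∈ interior (⋃ n, Set.Icc (a n) (b n)), f x < lam)) :
    volume (⋃ n, Set.Icc (a n) (b n)) ≤
      volume (Dset f (⋃ n, Set.Icc (a n) (b n))) := by
  rcases hsign with hpos | hneg
  · exact main_aux a b lam f hab hdisj hf hend hpos
  · have h := main_aux a b lam (fun x => 2 * lam - f x) hab hdisj
      (continuousOn_const.sub hf)
      (fun n => ⟨by show 2 * lam - f (a n) = lam; rw [(hend n).1]; ring,
        by show 2 * lam - f (b n) = lam; rw [(hend n).2]; ring⟩)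
      (fun x hx => by have := hneg x hx; show lam < 2 * lam - f x; linarith)
    rwa [Dset_flip] at h
end

section
/- Let $a < b$ and $\lambda$ be real numbers, and let $f : [a,b] \to \mathbb{R}$ be continuous with $f(a) = f(b) = \lambda$. Then the Lebesgue outer measure of $D_f([a,b])$ is at least $\frac{b-a}{3}$. -/
open MeasureTheory

lemma mem_Dset_of {f : ℝ → ℝ} {a b x c : ℝ} (hc : 0 < c) (hx : a ≤ x)
    (hxc : x + c ≤ b) (hfe : f (x + c) = f x) : c ∈ Dset f (Set.Icc a b) := by
  refine ⟨hc, x + c, ⟨by linarith, hxc⟩, x, ⟨hx, by linarith⟩, ?_, hfe⟩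
  rw [show x + c - x = c by ring, abs_of_pos hc]

/-- sign constancy of `x ↦ f (x+c) - f x` when it never vanishes -/
lemma sign_const {f : ℝ → ℝ} {a b c : ℝ} (hf : ContinuousOn f (Set.Icc a b))
    (hc : 0 < c) (hcb : a + c ≤ b)
    (h : ∀ x, a ≤ x → x + c ≤ b → f (x + c) ≠ f x) :
    (∀ x, a ≤ x → x + c ≤ b → f x < f (x + c)) ∨
    (∀ x, a ≤ x → x + c ≤ b → f (x + c) < f x) := by
  by_contra hcon
  push_neg at hcon
  obtain ⟨⟨x₁, hx₁a, hx₁b, h₁⟩, ⟨x₂, hx₂a, hx₂b, h₂⟩⟩ := hcon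
  have hg₁ : f (x₁ + c) - f x₁ < 0 :=
    sub_neg.mpr (lt_of_le_of_ne h₁ (h x₁ hx₁a hx₁b))
  have hg₂ : 0 < f (x₂ + c) - f x₂ :=
    sub_pos.mpr (lt_of_le_of_ne h₂ (fun hh => h x₂ hx₂a hx₂b hh.symm))
  set g : ℝ → ℝ := fun x => f (x + c) - f x with hg
  have hsub : Set.Icc a (b - c) ⊆ Set.Icc a b := by
    intro x hx
    rw [Set.mem_Icc] at hx ⊢
    constructor <;> linarith [hx.1, hx.2]
  have hgc : ContinuousOn g (Set.Icc a (b - c)) := by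
    apply ContinuousOn.sub
    · apply hf.comp ((continuous_id.add continuous_const).continuousOn)
      intro x hx
      rw [Set.mem_Icc] at hx ⊢
      constructor <;> simp only [Pi.add_apply, id_eq] <;> linarith [hx.1, hx.2]
    · exact hf.mono hsub
  have hx₁ : x₁ ∈ Set.Icc a (b - c) := by rw [Set.mem_Icc]; constructor <;> linarith
  have hx₂ : x₂ ∈ Set.Icc a (b - c) := by rw [Set.mem_Icc]; constructor <;> linarith
  have huIcc : Set.uIcc x₁ x₂ ⊆ Set.Icc a (b - c) := Set.uIcc_subset_Icc hx₁ hx₂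
  have hivt := intermediate_value_uIcc (hgc.mono huIcc)
  have h0 : (0 : ℝ) ∈ Set.uIcc (g x₁) (g x₂) := by
    rw [Set.mem_uIcc]
    exact Or.inl ⟨hg₁.le, hg₂.le⟩
  obtain ⟨z, hz, hz0⟩ := hivt h0
  have hzmem := huIcc hz
  rw [Set.mem_Icc] at hzmem
  exact h z hzmem.1 (by linarith [hzmem.2]) (by simpa [hg, sub_eq_zero] using hz0)

/-- Key lemma: for `0 < d < b - a`, either `d` or `(b-a-d)/2` is a chord length. -/
lemma key {f : ℝ → ℝ} {a b lam : ℝ} (hab : a < b)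
    (hf : ContinuousOn f (Set.Icc a b)) (hfa : f a = lam) (hfb : f b = lam)
    {d : ℝ} (hd : 0 < d) (hdL : d < b - a) (hdD : d ∉ Dset f (Set.Icc a b)) :
    (b - a - d) / 2 ∈ Dset f (Set.Icc a b) := by
  by_contra heD
  set e : ℝ := (b - a - d) / 2 with he_def
  have he : 0 < e := by simp only [he_def]; linarith
  have h2e : e + e = b - a - d := by simp only [he_def]; ring
  have Hd : ∀ x, a ≤ x → x + d ≤ b → f (x + d) ≠ f x :=
    fun x hx hxb hEq => hdD (mem_Dset_of hd hx hxb hEq)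
  have He : ∀ x, a ≤ x → x + e ≤ b → f (x + e) ≠ f x :=
    fun x hx hxb hEq => heD (mem_Dset_of he hx hxb hEq)
  have Sd := sign_const hf hd (by linarith) Hd
  have Se := sign_const hf he (by linarith) He
  have hfab : f a = f b := by rw [hfa, hfb]
  rcases Sd with Pd | Nd <;> rcases Se with Pe | Ne
  · -- both positive: chain a, a+e, a+e+d, b
    have h1 : f a < f (a + e) := Pe a le_rfl (by linarith)
    have h2 : f (a + e) < f (a + e + d) := Pd (a + e) (by linarith) (by linarith)
    have h3 : f (a + e + d) < f (a + e + d + e) := Pe (a + e + d) (by linarith) (by linarith)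
    have hb : a + e + d + e = b := by linarith
    rw [hb] at h3
    linarith [hfab]
  · -- d positive, e negative : minimum argument
    obtain ⟨xm, hxm, hmin⟩ :=
      IsCompact.exists_isMinOn isCompact_Icc (Set.nonempty_Icc.2 hab.le) hf
    rw [Set.mem_Icc] at hxm
    have hmin' : ∀ y, a ≤ y → y ≤ b → f xm ≤ f y := by
      intro y h1 h2
      exact isMinOn_iff.mp hmin y (Set.mem_Icc.mpr ⟨h1, h2⟩)
    have hc1 : ¬ (xm + e ≤ b) := by
      intro hc
      have := Ne xm hxm.1 hc
      have := hmin' (xm + e) (by linarith [hxm.1]) hc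
      linarith
    have hc2 : ¬ (a + d ≤ xm) := by
      intro hc
      have h4 := Pd (xm - d) (by linarith) (by linarith [hxm.2])
      rw [show xm - d + d = xm by ring] at h4
      have := hmin' (xm - d) (by linarith) (by linarith [hxm.2])
      linarith
    push_neg at hc1 hc2
    linarith
  · -- d negative, e positive : maximum argument
    obtain ⟨xm, hxm, hmax⟩ :=
      IsCompact.exists_isMaxOn isCompact_Icc (Set.nonempty_Icc.2 hab.le) hf
    rw [Set.mem_Icc] at hxm
    have hmax' : ∀ y, a ≤ y → y ≤ b → f y ≤ f xm := by
      intro y h1 h2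
      exact isMaxOn_iff.mp hmax y (Set.mem_Icc.mpr ⟨h1, h2⟩)
    have hc1 : ¬ (xm + e ≤ b) := by
      intro hc
      have := Pe xm hxm.1 hc
      have := hmax' (xm + e) (by linarith [hxm.1]) hc
      linarith
    have hc2 : ¬ (a + d ≤ xm) := by
      intro hc
      have h4 := Nd (xm - d) (by linarith) (by linarith [hxm.2])
      rw [show xm - d + d = xm by ring] at h4
      have := hmax' (xm - d) (by linarith) (by linarith [hxm.2])
      linarith
    push_neg at hc1 hc2
    linarith
  · -- both negative: chain
    have h1 : f (a + e) < f a := Ne a le_rfl (by linarith)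
    have h2 : f (a + e + d) < f (a + e) := Nd (a + e) (by linarith) (by linarith)
    have h3 : f (a + e + d + e) < f (a + e + d) := Ne (a + e + d) (by linarith) (by linarith)
    have hb : a + e + d + e = b := by linarith
    rw [hb] at h3
    linarith [hfab]

/-- If `f` is continuous on `[a,b]` with `f a = f b = λ`, then the
Lebesgue outer measure of `D_f([a,b])` is at least `(b-a)/3`. -/
theorem stmt_9 (a b lam : ℝ) (hab : a < b) (f : ℝ → ℝ)
    (hf : ContinuousOn f (Set.Icc a b)) (hfa : f a = lam) (hfb : f b = lam) :
    ENNReal.ofReal ((b - a) / 3) ≤ volume (Dset f (Set.Icc a b)) := by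
  set D := Dset f (Set.Icc a b) with hD
  set N : Set ℝ := Set.Ioc 0 (b - a) \ D with hN
  set φ : ℝ → ℝ := fun x => (b - a - x) / 2 with hφ
  -- b - a itself is a chord length
  have hLD : b - a ∈ D := by
    apply mem_Dset_of (by linarith) le_rfl (by linarith)
    rw [show a + (b - a) = b by ring, hfa, hfb]
  -- N maps into D under φ
  have hND : N ⊆ φ ⁻¹' D := by
    rintro n ⟨hn1, hn2⟩
    rw [Set.mem_Ioc] at hn1
    have hnlt : n < b - a := by
      rcases lt_or_eq_of_le hn1.2 with h | h
      · exact h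
      · exact absurd (h ▸ hLD) hn2
    exact key hab hf hfa hfb hn1.1 hnlt hn2
  -- φ is measurable
  have hφm : Measurable φ := by
    apply Measurable.div_const
    exact (measurable_const.sub measurable_id)
  -- compute map φ volume = 2 • volume
  have hmap : Measure.map φ volume = (2 : ENNReal) • volume := by
    have hcomp : φ = (fun y : ℝ => (b - a) / 2 + y) ∘ (fun x : ℝ => (-2⁻¹ : ℝ) * x) := by
      funext x; simp [hφ]; ring
    rw [hcomp, ← Measure.map_map (measurable_const_add _) (measurable_const_mul _)]
    rw [Real.map_volume_mul_left (by norm_num : (-2⁻¹ : ℝ) ≠ 0)]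
    rw [Measure.map_smul, Measure.IsAddLeftInvariant.map_add_left_eq_self (μ := (volume : Measure ℝ))]
    congr 1
    rw [show |(-2⁻¹ : ℝ)⁻¹| = 2 by norm_num]
    simp [ENNReal.ofReal_ofNat]
  have hvolN : volume N ≤ 2 * volume D := by
    calc volume N ≤ volume (φ ⁻¹' D) := measure_mono hND
    _ ≤ Measure.map φ volume D := Measure.le_map_apply hφm.aemeasurable D
    _ = 2 * volume D := by rw [hmap]; simp [Measure.smul_apply]
  have hIoc : Set.Ioc (0:ℝ) (b - a) ⊆ N ∪ D := by
    intro x hx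
    by_cases hxD : x ∈ D
    · exact Or.inr hxD
    · exact Or.inl ⟨hx, hxD⟩
  have hmain : ENNReal.ofReal (b - a) ≤ 3 * volume D := by
    calc ENNReal.ofReal (b - a) = volume (Set.Ioc (0:ℝ) (b - a)) := by
          rw [Real.volume_Ioc, sub_zero]
    _ ≤ volume (N ∪ D) := measure_mono hIoc
    _ ≤ volume N + volume D := measure_union_le _ _
    _ ≤ 2 * volume D + volume D := by exact add_le_add_left hvolN _
    _ = 3 * volume D := by ring
  have h3 : ENNReal.ofReal (b - a) = 3 * ENNReal.ofReal ((b - a) / 3) := by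
    rw [← ENNReal.ofReal_ofNat, ← ENNReal.ofReal_mul (by norm_num : (0:ℝ) ≤ 3)]
    congr 1
    ring
  rw [h3] at hmain
  exact (ENNReal.mul_le_mul_iff_right (by norm_num) (by norm_num)).mp hmain
end
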